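/- Every deterministic k-way branching program computing Children_2^4(k) has at least k^4/2 states. -/
import Mathlib


/-! ## Tree evaluation problems -/

/-- The `k`-valued input variables of the tree evaluation problem on the complete
`d`-ary tree with `h` levels: the single variable of a height-1 tree is its leaf
value; for a tree of height `h+2`, a variable is either an entry `f_root(args)`
of the root function's table, or a variable of one of the `d` principal subtrees. -/
inductive TEVar (d k : ℕ) : ℕ → Type where
  | leaf : TEVar d k 1
  | root {h : ℕ} (args : Fin d → Fin k) : TEVar d k (h + 2)
  | child {h : ℕ} (j : Fin d) (x : TEVar d k (h + 1)) : TEVar d k (h + 2)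

/-- The value of the root of the tree, computed bottom-up from an assignment of
values to all input variables. (For the degenerate height 0 it returns a junk value.) -/
def rootValue (d k : ℕ) (hk : 0 < k) : (h : ℕ) → (TEVar d k h → Fin k) → Fin k
  | 0, _ => ⟨0, hk⟩
  | 1, I => I .leaf
  | (h + 2), I => I (.root fun j => rootValue d k hk (h + 1) fun x => I (.child j x))

/-- The Boolean tree evaluation problem `BT_d^h(k)`: does the root have value 1
(represented by `(0 : Fin k)`)? -/
def BTfun (d k : ℕ) (hk : 0 < k) (h : ℕ) (I : TEVar d k h → Fin k) : Bool :=
  decide (rootValue d k hk h I = ⟨0, hk⟩)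

/-- `ThriftyVar d k hk h I v` holds iff querying variable `v` on input `I` is a
thrifty query: if `v` is an entry `f_i(args)` of the function table of an internal
node `i`, then `args` must be the tuple of correct values of the children of `i`. -/
def ThriftyVar (d k : ℕ) (hk : 0 < k) : (h : ℕ) → (TEVar d k h → Fin k) → TEVar d k h → Prop
  | 0, _, _ => True
  | 1, _, _ => True
  | (h + 2), I, .root args =>
      args = fun j => rootValue d k hk (h + 1) fun x => I (.child j x)
  | (h + 2), I, .child j x =>
      ThriftyVar d k hk (h + 1) (fun y => I (.child j y)) x

/-! ## k-way branching programs -/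

/-- A deterministic `k`-way branching program with input variables `V` (each taking
values in `[k] = Fin k`) and outputs in `R`. Each state is either a non-final state
labelled with the variable it queries (`Sum.inl v`), with `k` outedges given by
`next`, or a final state labelled with an output (`Sum.inr r`). -/
structure DBP (V : Type) (k : ℕ) (R : Type) where
  Q : Type
  fin : Fintype Q
  start : Q
  label : Q → V ⊕ R
  next : Q → Fin k → Q

namespace DBP

variable {V : Type} {k : ℕ} {R : Type}

/-- The size of a branching program is its number of states. -/
def size (B : DBP V k R) : ℕ := @Fintype.card B.Q B.fin

/-- One deterministic step on input `I` (final states are absorbing). -/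
def step (B : DBP V k R) (I : V → Fin k) (q : B.Q) : B.Q :=
  match B.label q with
  | .inl v => B.next q (I v)
  | .inr _ => q

/-- `B` computes the total function `f`: on every input, the computation reaches the
final state labelled with the correct output. -/
def Computes (B : DBP V k R) (f : (V → Fin k) → R) : Prop :=
  ∀ I : V → Fin k, ∃ t : ℕ, B.label ((B.step I)^[t] B.start) = .inr (f I)

end DBP

/-- A nondeterministic `k`-way branching program: as in `DBP`, but a non-final state
may have any number of outedges with any labels in `Fin k`, given by the edge
relation `edge q a q'`. -/
structure NBP (V : Type) (k : ℕ) (R : Type) where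
  Q : Type
  fin : Fintype Q
  start : Q
  label : Q → V ⊕ R
  edge : Q → Fin k → Q → Prop

namespace NBP

variable {V : Type} {k : ℕ} {R : Type}

/-- The size of a branching program is its number of states. -/
def size (B : NBP V k R) : ℕ := @Fintype.card B.Q B.fin

/-- One nondeterministic step on input `I`: follow an edge out of a non-final state
whose label matches the value of the queried variable. -/
def Step (B : NBP V k R) (I : V → Fin k) (q q' : B.Q) : Prop :=
  ∃ v, B.label q = .inl v ∧ B.edge q (I v) q'

/-- Some computation of `B` on input `I` ends in a final state labelled `r`. -/
def Outputs (B : NBP V k R) (I : V → Fin k) (r : R) : Prop :=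
  ∃ q, Relation.ReflTransGen (B.Step I) B.start q ∧ B.label q = .inr r

/-- `B` computes the total function `f`: on every input some computation ends in a
final state, and every computation ending in a final state ends in the one labelled
with the correct output. -/
def Computes (B : NBP V k R) (f : (V → Fin k) → R) : Prop :=
  ∀ (I : V → Fin k) (r : R), B.Outputs I r ↔ r = f I

end NBP

/-- A deterministic branching program for a tree evaluation problem is thrifty if on
every input, every query made during the computation is a thrifty query. -/
def DBPThrifty {R : Type} (d k h : ℕ) (hk : 0 < k) (B : DBP (TEVar d k h) k R) : Prop :=
  ∀ (I : TEVar d k h → Fin k) (t : ℕ) (v : TEVar d k h),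
    B.label ((B.step I)^[t] B.start) = .inl v → ThriftyVar d k hk h I v

/-- A nondeterministic branching program for a tree evaluation problem is thrifty if
for every input, every computation ending in a final state makes only thrifty
queries. -/
def NBPThrifty {R : Type} (d k h : ℕ) (hk : 0 < k) (B : NBP (TEVar d k h) k R) : Prop :=
  ∀ (I : TEVar d k h → Fin k) (n : ℕ) (path : ℕ → B.Q),
    path 0 = B.start →
    (∀ t < n, B.Step I (path t) (path (t + 1))) →
    (∃ r, B.label (path n) = .inr r) →
    ∀ t < n, ∀ v, B.label (path t) = .inl v → ThriftyVar d k hk h I v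

/-- The problem `Children_2^4(k)`: the input consists of two height-3 binary tree
evaluation inputs (the two principal subtrees of the height-4 tree; the root function
is omitted), and the output is the pair of values of the root's two children. -/
def childrenFun (k : ℕ) (hk : 0 < k) (I : Fin 2 × TEVar 2 k 3 → Fin k) :
    Fin k × Fin k :=
  (rootValue 2 k hk 3 fun x => I (0, x), rootValue 2 k hk 3 fun x => I (1, x))

/-! ### Auxiliary development for the lower bound -/

namespace ChildrenLB

section Runs

variable {Vt Rt : Type} {k : ℕ} (B : DBP Vt k Rt)

/-- The state of the deterministic program at time `t` on input `I`. -/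
def runSt (I : Vt → Fin k) (t : ℕ) : B.Q := (B.step I)^[t] B.start

lemma runSt_succ (I : Vt → Fin k) (t : ℕ) :
    runSt B I (t + 1) = B.step I (runSt B I t) :=
  Function.iterate_succ_apply' _ _ _

lemma step_inr {I : Vt → Fin k} {q : B.Q} {r : Rt} (h : B.label q = .inr r) :
    B.step I q = q := by
  simp [DBP.step, h]

lemma step_inl {I : Vt → Fin k} {q : B.Q} {v : Vt} (h : B.label q = .inl v) :
    B.step I q = B.next q (I v) := by
  simp [DBP.step, h]

lemma runSt_absorb {I : Vt → Fin k} {t : ℕ} {r : Rt}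
    (h : B.label (runSt B I t) = .inr r) :
    ∀ s, t ≤ s → runSt B I s = runSt B I t := by
  have key : ∀ n, runSt B I (t + n) = runSt B I t := by
    intro n
    induction n with
    | zero => rfl
    | succ n ih =>
      rw [show t + (n + 1) = (t + n) + 1 from rfl, runSt_succ, ih, step_inr B h]
  intro s hs
  obtain ⟨n, rfl⟩ := Nat.exists_eq_add_of_le hs
  exact key n

lemma out_unique {f : (Vt → Fin k) → Rt} (hB : B.Computes f) {I : Vt → Fin k}
    {t : ℕ} {r : Rt} (h : B.label (runSt B I t) = .inr r) : r = f I := by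
  obtain ⟨t₀, h₀⟩ := hB I
  have h₀' : B.label (runSt B I t₀) = .inr (f I) := h₀
  rcases le_total t t₀ with hle | hle
  · rw [runSt_absorb B h t₀ hle] at h₀'
    exact Sum.inr.inj (h.symm.trans h₀')
  · rw [runSt_absorb B h₀' t hle] at h
    exact Sum.inr.inj (h.symm.trans h₀')

lemma run_congr (I J : Vt → Fin k)
    (h : ∀ t v, B.label (runSt B I t) = .inl v → I v = J v) :
    ∀ t, runSt B I t = runSt B J t := by
  intro t
  induction t with
  | zero => rfl
  | succ t ih =>
    rw [runSt_succ, runSt_succ, ← ih]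
    cases hl : B.label (runSt B I t) with
    | inl v => rw [step_inl B hl, step_inl B hl, h t v hl]
    | inr r => rw [step_inr B hl, step_inr B hl]

lemma out_congr {f : (Vt → Fin k) → Rt} (hB : B.Computes f) (I J : Vt → Fin k)
    (h : ∀ t v, B.label (runSt B I t) = .inl v → I v = J v) : f I = f J := by
  obtain ⟨t₀, h₀⟩ := hB I
  have h₀' : B.label (runSt B J t₀) = .inr (f I) := by
    rw [← run_congr B I J h t₀]; exact h₀
  exact out_unique B hB h₀'

lemma suffix_run (I J : Vt → Fin k) (D : Vt → Prop)
    (hoff : ∀ v, ¬ D v → I v = J v)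
    {a b : ℕ} (hq : runSt B I a = runSt B J b)
    {v₀ : Vt} (hlab : B.label (runSt B I a) = .inl v₀) (hv₀ : I v₀ = J v₀)
    (hafter : ∀ t, a < t → ∀ v, B.label (runSt B I t) = .inl v → ¬ D v) :
    ∀ n, runSt B I (a + n) = runSt B J (b + n) := by
  intro n
  induction n with
  | zero => simpa using hq
  | succ n ih =>
    rw [show a + (n + 1) = (a + n) + 1 from rfl, show b + (n + 1) = (b + n) + 1 from rfl,
      runSt_succ, runSt_succ, ← ih]
    cases hl : B.label (runSt B I (a + n)) with
    | inr r => rw [step_inr B hl, step_inr B hl]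
    | inl v =>
      have hIv : I v = J v := by
        cases n with
        | zero =>
          have hv : v = v₀ := by
            have h2 : B.label (runSt B I a) = Sum.inl v := hl
            exact Sum.inl.inj (h2.symm.trans hlab)
          rw [hv]; exact hv₀
        | succ m =>
          exact hoff v (hafter (a + (m + 1)) (by omega) v hl)
      rw [step_inl B hl, step_inl B hl, hIv]

lemma suffix_out {f : (Vt → Fin k) → Rt} (hB : B.Computes f) (I J : Vt → Fin k)
    (D : Vt → Prop)
    (hoff : ∀ v, ¬ D v → I v = J v)
    {a b : ℕ} (hq : runSt B I a = runSt B J b)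
    {v₀ : Vt} (hlab : B.label (runSt B I a) = .inl v₀) (hv₀ : I v₀ = J v₀)
    (hafter : ∀ t, a < t → ∀ v, B.label (runSt B I t) = .inl v → ¬ D v) :
    f I = f J := by
  obtain ⟨T, hT⟩ := hB I
  have hT' : B.label (runSt B I T) = .inr (f I) := hT
  have haT : a ≤ T := by
    by_contra hcon
    push_neg at hcon
    have habs := runSt_absorb B hT' a (le_of_lt hcon)
    rw [habs, hT'] at hlab
    exact absurd hlab (by simp)
  obtain ⟨n, rfl⟩ : ∃ n, T = a + n := ⟨T - a, by omega⟩
  have h2 := suffix_run B I J D hoff hq hlab hv₀ hafter n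
  have h3 : B.label (runSt B J (b + n)) = .inr (f I) := by rw [← h2]; exact hT'
  exact out_unique B hB h3

end Runs

section Children

variable {k : ℕ}

/-- Leaf values: `l s c j` is the value of leaf `j` below child `c` of subtree `s`. -/
abbrev Lv (k : ℕ) := Fin 2 → Fin 2 → Fin 2 → Fin k

/-- Middle-level critical table values. -/
abbrev Wv (k : ℕ) := Fin 2 → Fin 2 → Fin k

/-- The critical middle-level table entry of subtree `s`, child `c`. -/
def Pvar (l : Lv k) (s c : Fin 2) : Fin 2 × TEVar 2 k 3 :=
  (s, .child c (.root (l s c)))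

/-- The family of inputs: leaves `l`, middle tables zero except at the critical
entries where they take values `w`, root-children tables are addition. -/
def Inp [NeZero k] (l : Lv k) (w : Wv k) : Fin 2 × TEVar 2 k 3 → Fin k
  | (_, .root args) => args 0 + args 1
  | (s, .child c (.root args)) => if args = l s c then w s c else 0
  | (s, .child c (.child j .leaf)) => l s c j

variable [NeZero k]

lemma Inp_Pvar (l : Lv k) (w : Wv k) (s c : Fin 2) : Inp l w (Pvar l s c) = w s c := by
  simp [Inp, Pvar]

lemma Inp_off (l : Lv k) (w u : Wv k) (v : Fin 2 × TEVar 2 k 3)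
    (hv : ∀ s c : Fin 2, v ≠ Pvar l s c) :
    Inp l w v = Inp l u v := by
  obtain ⟨s, x⟩ := v
  cases x with
  | root args => rfl
  | child c y =>
    cases y with
    | root args =>
      by_cases h : args = l s c
      · exact absurd (by simp [Pvar, h]) (hv s c)
      · simp [Inp, h]
    | child j z => cases z with | leaf => rfl

lemma childrenFun_Inp (hk : 0 < k) (l : Lv k) (w : Wv k) :
    childrenFun k hk (Inp l w) = (w 0 0 + w 0 1, w 1 0 + w 1 1) := by
  simp [childrenFun, rootValue, Inp]

end Children

section Main

variable {k : ℕ} [NeZero k] {hk : 0 < k}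
variable (B : DBP (Fin 2 × TEVar 2 k 3) k (Fin k × Fin k))
variable (hB : B.Computes (childrenFun k hk))

include hB in
lemma must_query (hk2 : 2 ≤ k) (l : Lv k) (w : Wv k) :
    ∃ t s c, B.label (runSt B (Inp l w) t) = .inl (Pvar l s c) := by
  by_contra hcon
  push_neg at hcon
  set w' : Wv k := fun s c => if s = 0 ∧ c = 0 then w 0 0 + 1 else w s c with hw'
  have hout : childrenFun k hk (Inp l w) = childrenFun k hk (Inp l w') := by
    apply out_congr B hB
    intro t v hv
    apply Inp_off
    intro s c heq
    exact hcon t s c (heq ▸ hv)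
  rw [childrenFun_Inp hk, childrenFun_Inp hk] at hout
  have h1 := congrArg Prod.fst hout
  simp only [hw'] at h1
  norm_num at h1
  omega

open Classical in
noncomputable def Tfin (l : Lv k) (w : Wv k) : ℕ := (hB (Inp l w)).choose

lemma Tfin_spec (l : Lv k) (w : Wv k) :
    B.label (runSt B (Inp l w) (Tfin B hB l w)) = .inr (childrenFun k hk (Inp l w)) :=
  (hB (Inp l w)).choose_spec

lemma query_le_Tfin (l : Lv k) (w : Wv k) {t : ℕ} {v : Fin 2 × TEVar 2 k 3}
    (hv : B.label (runSt B (Inp l w) t) = .inl v) :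
    t ≤ Tfin B hB l w := by
  by_contra hcon
  push_neg at hcon
  rw [runSt_absorb B (Tfin_spec B hB l w) t (le_of_lt hcon), Tfin_spec B hB l w] at hv
  exact absurd hv (by simp)

open Classical in
noncomputable def tstar (l : Lv k) (w : Wv k) : ℕ :=
  Nat.findGreatest (fun t => ∃ s c, B.label (runSt B (Inp l w) t) = .inl (Pvar l s c))
    (Tfin B hB l w)

open Classical in
lemma tstar_spec (hk2 : 2 ≤ k) (l : Lv k) (w : Wv k) :
    ∃ s c, B.label (runSt B (Inp l w) (tstar B hB l w)) = .inl (Pvar l s c) := by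
  obtain ⟨t, s, c, ht⟩ := must_query B hB hk2 l w
  exact Nat.findGreatest_spec
    (P := fun t => ∃ s c, B.label (runSt B (Inp l w) t) = .inl (Pvar l s c))
    (query_le_Tfin B hB l w ht) ⟨s, c, ht⟩

open Classical in
lemma tstar_last (l : Lv k) (w : Wv k) :
    ∀ t, tstar B hB l w < t →
      ∀ v, B.label (runSt B (Inp l w) t) = .inl v → ∀ s c : Fin 2, v ≠ Pvar l s c := by
  intro t ht v hv s c heq
  subst heq
  exact Nat.findGreatest_is_greatest ht (query_le_Tfin B hB l w hv) ⟨s, c, hv⟩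

noncomputable def scSel (hk2 : 2 ≤ k) (l : Lv k) (w : Wv k) : Fin 2 × Fin 2 :=
  ⟨(tstar_spec B hB hk2 l w).choose, (tstar_spec B hB hk2 l w).choose_spec.choose⟩

lemma scSel_spec (hk2 : 2 ≤ k) (l : Lv k) (w : Wv k) :
    B.label (runSt B (Inp l w) (tstar B hB l w)) =
      .inl (Pvar l (scSel B hB hk2 l w).1 (scSel B hB hk2 l w).2) :=
  (tstar_spec B hB hk2 l w).choose_spec.choose_spec

noncomputable def Phi (hk2 : 2 ≤ k) (p : Lv k × Wv k) : B.Q × Lv k :=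
  (runSt B (Inp p.1 p.2) (tstar B hB p.1 p.2),
   fun s c j =>
     if (s, c) = scSel B hB hk2 p.1 p.2 then
       (if j = 0 then p.2 s c else p.2 (1 - (scSel B hB hk2 p.1 p.2).1) 0)
     else p.1 s c j)

omit [NeZero k] in
lemma wv_ext {w u : Wv k} {s₀ c₀ : Fin 2}
    (e1 : w s₀ c₀ = u s₀ c₀) (e2 : w (1 - s₀) 0 = u (1 - s₀) 0)
    (hsum : ∀ s, w s 0 + w s 1 = u s 0 + u s 1) : w = u := by
  have h2 : ∀ c : Fin 2, c = 0 ∨ c = 1 := by decide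
  have slot : ∀ s c, w s c = u s c → ∀ c', w s c' = u s c' := by
    intro s c hc c'
    have hs := hsum s
    rcases h2 c with rfl | rfl <;> rcases h2 c' with rfl | rfl
    · exact hc
    · rw [hc] at hs; exact add_left_cancel hs
    · rw [hc] at hs; exact add_right_cancel hs
    · exact hc
  funext s c
  have hcase : s = s₀ ∨ s = 1 - s₀ := by
    rcases h2 s with rfl | rfl <;> rcases h2 s₀ with rfl | rfl <;> decide
  rcases hcase with rfl | rfl
  · exact slot _ c₀ e1 c
  · exact slot _ 0 e2 c

lemma Phi_inj (hk2 : 2 ≤ k) : Function.Injective (Phi B hB hk2) := by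
  rintro ⟨l, w⟩ ⟨m, u⟩ hPhi
  have hq := congrArg Prod.fst hPhi
  have hL := congrArg Prod.snd hPhi
  simp only [Phi] at hq hL
  rcases he1 : scSel B hB hk2 l w with ⟨s₁, c₁⟩
  rcases he2 : scSel B hB hk2 m u with ⟨s₂, c₂⟩
  rw [he1, he2] at hL
  have hlab1 := scSel_spec B hB hk2 l w
  have hlab2 := scSel_spec B hB hk2 m u
  rw [he1] at hlab1
  rw [he2] at hlab2
  rw [← hq] at hlab2
  have hPv : Pvar l s₁ c₁ = Pvar m s₂ c₂ := Sum.inl.inj (hlab1.symm.trans hlab2)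
  have hPv' := hPv
  simp only [Pvar, Prod.mk.injEq] at hPv'
  obtain ⟨hs, hrest⟩ := hPv'
  subst hs
  have hcc : c₁ = c₂ ∧ l s₁ c₁ = m s₁ c₂ := by simpa using hrest
  obtain ⟨hc, hargs⟩ := hcc
  subst hc
  have hlm : l = m := by
    funext s c j
    by_cases hmem : (s, c) = ((s₁ : Fin 2), (c₁ : Fin 2))
    · rw [Prod.mk.injEq] at hmem
      obtain ⟨rfl, rfl⟩ := hmem
      exact congrFun hargs j
    · have hp := congrFun (congrFun (congrFun hL s) c) j
      rw [if_neg hmem, if_neg hmem] at hp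
      exact hp
  subst hlm
  have hp0 := congrFun (congrFun (congrFun hL s₁) c₁) 0
  have hp1 := congrFun (congrFun (congrFun hL s₁) c₁) 1
  simp only [if_pos rfl] at hp0 hp1
  norm_num at hp0 hp1
  have hout : childrenFun k hk (Inp l w) = childrenFun k hk (Inp l u) := by
    apply suffix_out B hB (Inp l w) (Inp l u) (fun v => ∃ s c : Fin 2, v = Pvar l s c)
      ?hoff hq hlab1 ?hv0 ?hafter
    case hoff =>
      intro v hv
      apply Inp_off
      intro s c heq
      exact hv ⟨s, c, heq⟩
    case hv0 => rw [Inp_Pvar, Inp_Pvar]; exact hp0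
    case hafter =>
      rintro t ht v hv ⟨s, c, rfl⟩
      exact tstar_last B hB l w t ht _ hv s c rfl
  rw [childrenFun_Inp hk, childrenFun_Inp hk] at hout
  rw [Prod.mk.injEq] at hout
  have hsum : ∀ s : Fin 2, w s 0 + w s 1 = u s 0 + u s 1 := by
    intro s
    have h2 : ∀ c : Fin 2, c = 0 ∨ c = 1 := by decide
    rcases h2 s with rfl | rfl
    · exact hout.1
    · exact hout.2
  have hwu : w = u := wv_ext hp0 hp1 hsum
  rw [hwu]

end Main

end ChildrenLB

/-- Every deterministic `k`-way branching program computing `Children_2^4(k)` has at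
least `k^4 / 2` states. -/
theorem det_children_lower (k : ℕ) (hk : 2 ≤ k) :
    ∀ B : DBP (Fin 2 × TEVar 2 k 3) k (Fin k × Fin k),
      B.Computes (childrenFun k (by omega)) →
      (k : ℝ) ^ 4 / 2 ≤ (B.size : ℝ) := by
  intro B hB
  haveI : NeZero k := ⟨by omega⟩
  letI := B.fin
  have hcard := Fintype.card_le_of_injective _ (ChildrenLB.Phi_inj B hB hk)
  have c1 : Fintype.card (ChildrenLB.Lv k × ChildrenLB.Wv k) = k ^ 12 := by
    simp [Fintype.card_fun]
    ring
  have c2 : Fintype.card (B.Q × ChildrenLB.Lv k) = Fintype.card B.Q * k ^ 8 := by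
    rw [Fintype.card_prod]
    congr 1
    simp only [Fintype.card_fun, Fintype.card_fin]
    ring
  rw [c1, c2] at hcard
  have hsize : k ^ 4 ≤ B.size := by
    have hpos : 0 < k ^ 8 := pow_pos (by omega) 8
    have h2 : k ^ 4 * k ^ 8 ≤ B.size * k ^ 8 := by
      have h3 : k ^ 4 * k ^ 8 = k ^ 12 := by ring
      rw [h3]
      exact hcard
    exact Nat.le_of_mul_le_mul_right h2 hpos
  have hcast : (k : ℝ) ^ 4 ≤ (B.size : ℝ) := by exact_mod_cast hsize
  have h0 : (0 : ℝ) ≤ (k : ℝ) ^ 4 := by positivity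
  linarith
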